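/- Let $L > 0$, let $K(x) = \frac{1}{2}\int_0^{\pi/2} \tan\psi\, e^{-|x|/\cos\psi}\, d\psi$, and let $\Psi \in C([0,L])$. Then there exists a unique $\theta \in C([0,L])$ satisfying the Fredholm integral equation of the second kind $\theta(x) = \int_0^L \theta(\xi) K(x - \xi)\, d\xi + \Psi(x)$ for all $x \in [0,L]$. -/

import Mathlib

/-!
With `μ = cos ψ` the kernel is `K x = E₁ |x| / 2`, of total mass one on `ℝ`. On a slab part of
this mass is always lost: by Fubini,
`∫₀ᶜ E₁ = ∫₀^{π/2} sin ψ (1 - exp (-c / cos ψ)) dψ ≤ 1 - exp (-2c) / 2`.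
Hence `∫₀ᴸ K (x - ξ) dξ ≤ 1 - exp (-2L) / 2 < 1` for every `x ∈ [0, L]`, so the right-hand side
of the equation is a contraction of `C([0, L])` and Banach's fixed point theorem applies. That the
integral term of a continuous function is again continuous is dominated convergence, `K` being
locally integrable.
-/

open Real MeasureTheory Set Function

section Fredholm

variable {L q : ℝ} {K Ψ : ℝ → ℝ}

lemma MeasureTheory.LocallyIntegrable.intervalIntegrable_comp_sub_left (hK : LocallyIntegrable K)
    (x a b : ℝ) : IntervalIntegrable (fun ξ => K (x - ξ)) volume a b := by
  have hK' : IntervalIntegrable K volume (x - a) (x - b) :=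
    intervalIntegrable_iff.2 ((hK.integrableOn_isCompact isCompact_uIcc).mono_set uIoc_subset_uIcc)
  simpa using hK'.comp_sub_left x

lemma integral_mul_comp_sub_eq_integral_indicator (hL : 0 ≤ L) (h K : ℝ → ℝ) (x : ℝ) :
    ∫ ξ in (0:ℝ)..L, h ξ * K (x - ξ) = ∫ u, (Ioc 0 L).indicator h (x - u) * K u := by
  rw [intervalIntegral.integral_of_le hL, ← integral_indicator measurableSet_Ioc,
    ← integral_sub_left_eq_self (μ := volume) _ x]
  simp only [indicator_mul_left, sub_sub_cancel]

lemma continuous_integral_mul_comp_sub (hL : 0 < L) (hK : LocallyIntegrable K) {h : ℝ → ℝ}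
    (hh : Continuous h) : Continuous fun x => ∫ ξ in (0:ℝ)..L, h ξ * K (x - ξ) := by
  set H := (Ioc 0 L).indicator h
  obtain ⟨M, hM⟩ := (isCompact_Icc (a := 0) (b := L)).exists_bound_of_continuousOn hh.continuousOn
  have hHM : ∀ ξ, ‖H ξ‖ ≤ M := fun ξ => by
    by_cases hξ : ξ ∈ Ioc 0 L
    · simpa [H, hξ] using hM ξ (Ioc_subset_Icc_self hξ)
    · simpa [H, hξ] using (norm_nonneg _).trans (hM 0 ⟨le_rfl, hL.le⟩)
  simp_rw [integral_mul_comp_sub_eq_integral_indicator hL.le]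
  refine continuous_iff_continuousAt.2 fun x₀ => continuousAt_of_dominated
    (bound := (Icc (x₀ - L - 1) (x₀ + 1)).indicator fun u => M * ‖K u‖) ?_ ?_ ?_ ?_
  · have hH : Measurable H := hh.measurable.indicator measurableSet_Ioc
    exact Filter.Eventually.of_forall fun x =>
      (hH.comp (measurable_const.sub measurable_id)).aestronglyMeasurable.mul
        hK.aestronglyMeasurable
  · filter_upwards [Ioo_mem_nhds (sub_one_lt x₀) (lt_add_one x₀)] with x hx
    refine ae_of_all _ fun u => ?_
    by_cases hu : x - u ∈ Ioc 0 L
    · rw [indicator_of_mem (show u ∈ Icc (x₀ - L - 1) (x₀ + 1) from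
        ⟨by linarith [hx.1, hu.2], by linarith [hx.2, hu.1]⟩), norm_mul]
      exact mul_le_mul_of_nonneg_right (hHM _) (norm_nonneg _)
    · simp only [indicator_of_notMem hu, zero_mul, norm_zero]
      exact indicator_nonneg
        (fun u _ => mul_nonneg ((norm_nonneg _).trans (hHM 0)) (norm_nonneg _)) u
  · exact IntegrableOn.integrable_indicator
      ((hK.integrableOn_isCompact isCompact_Icc).norm.const_mul M) measurableSet_Icc
  · have hnull : ∀ᵐ u : ℝ, u ∉ ({x₀, x₀ - L} : Set ℝ) :=
      ((countable_singleton _).insert _).ae_notMem _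
    filter_upwards [hnull] with u hu
    have hfr : x₀ - u ∉ frontier (Ioc 0 L) := by
      rw [frontier_Ioc hL]
      intro hmem
      apply hu
      simp only [mem_insert_iff, mem_singleton_iff] at hmem ⊢
      rcases hmem with h0 | h0 <;> [left; right] <;> linarith
    exact ((hh.continuousOn.continuousAt_indicator hfr).comp (f := fun x => x - u)
      (continuous_sub_right u).continuousAt).mul continuousAt_const

def IsFredholmSolution (L : ℝ) (K Ψ θ : ℝ → ℝ) : Prop :=
  ContinuousOn θ (Icc 0 L) ∧ ∀ x ∈ Icc 0 L, θ x = (∫ ξ in (0:ℝ)..L, θ ξ * K (x - ξ)) + Ψ x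

noncomputable def kernelIntegral (hL : 0 < L) (hK : LocallyIntegrable K) (f : C(Icc 0 L, ℝ)) :
    C(Icc 0 L, ℝ) where
  toFun t := ∫ ξ in (0:ℝ)..L, IccExtend hL.le f ξ * K (t - ξ)
  continuous_toFun :=
    (continuous_integral_mul_comp_sub hL hK f.continuous.Icc_extend').comp continuous_subtype_val

lemma kernelIntegral_sub (hL : 0 < L) (hK : LocallyIntegrable K) (f g : C(Icc 0 L, ℝ)) :
    kernelIntegral hL hK (f - g) = kernelIntegral hL hK f - kernelIntegral hL hK g := by
  ext t
  have hint : ∀ f : C(Icc 0 L, ℝ),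
      IntervalIntegrable (fun ξ => IccExtend hL.le f ξ * K (t - ξ)) volume 0 L := fun f =>
    (hK.intervalIntegrable_comp_sub_left t 0 L).continuousOn_mul
      f.continuous.Icc_extend'.continuousOn
  simp only [kernelIntegral, ContinuousMap.coe_mk, ContinuousMap.sub_apply,
    ← intervalIntegral.integral_sub (hint f) (hint g), ← sub_mul]
  rfl

lemma norm_kernelIntegral_le (hL : 0 < L) (hK : LocallyIntegrable K)
    (hKq : ∀ x ∈ Icc 0 L, ∫ ξ in (0:ℝ)..L, |K (x - ξ)| ≤ q) (f : C(Icc 0 L, ℝ)) :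
    ‖kernelIntegral hL hK f‖ ≤ q * ‖f‖ := by
  have : Nonempty (Icc 0 L) := (nonempty_Icc.2 hL.le).to_subtype
  refine (ContinuousMap.norm_le_of_nonempty _).2 fun t => ?_
  calc ‖∫ ξ in (0:ℝ)..L, IccExtend hL.le f ξ * K (t - ξ)‖
      ≤ ∫ ξ in (0:ℝ)..L, ‖f‖ * |K (t - ξ)| := by
        refine intervalIntegral.norm_integral_le_of_norm_le hL.le (ae_of_all _ fun ξ _ => ?_)
          ((hK.intervalIntegrable_comp_sub_left t 0 L).abs.const_mul _)
        rw [norm_mul, Real.norm_eq_abs (K _)]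
        exact mul_le_mul_of_nonneg_right (f.norm_coe_le_norm _) (abs_nonneg _)
    _ = ‖f‖ * ∫ ξ in (0:ℝ)..L, |K (t - ξ)| := intervalIntegral.integral_const_mul _ _
    _ ≤ ‖f‖ * q := mul_le_mul_of_nonneg_left (hKq t t.2) (norm_nonneg f)
    _ = q * ‖f‖ := mul_comm _ _

noncomputable def fredholmMap (hL : 0 < L) (hK : LocallyIntegrable K)
    (hΨ : ContinuousOn Ψ (Icc 0 L)) (f : C(Icc 0 L, ℝ)) : C(Icc 0 L, ℝ) :=
  kernelIntegral hL hK f + ⟨Ψ ∘ Subtype.val, hΨ.comp_continuous continuous_subtype_val Subtype.prop⟩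

lemma contractingWith_fredholmMap (hL : 0 < L) (hK : LocallyIntegrable K)
    (hΨ : ContinuousOn Ψ (Icc 0 L)) (hq : q < 1)
    (hKq : ∀ x ∈ Icc 0 L, ∫ ξ in (0:ℝ)..L, |K (x - ξ)| ≤ q) :
    ContractingWith q.toNNReal (fredholmMap hL hK hΨ) := by
  refine ⟨Real.toNNReal_lt_one.2 hq, LipschitzWith.of_dist_le' fun f g => ?_⟩
  rw [fredholmMap, fredholmMap, dist_add_right, dist_eq_norm, dist_eq_norm, ← kernelIntegral_sub]
  exact norm_kernelIntegral_le hL hK hKq _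

lemma isFredholmSolution_IccExtend (hL : 0 < L) (hK : LocallyIntegrable K)
    (hΨ : ContinuousOn Ψ (Icc 0 L)) {f : C(Icc 0 L, ℝ)} (hf : IsFixedPt (fredholmMap hL hK hΨ) f) :
    IsFredholmSolution L K Ψ (IccExtend hL.le f) := by
  refine ⟨f.continuous.Icc_extend'.continuousOn, fun x hx => ?_⟩
  rw [IccExtend_of_mem hL.le f hx]
  exact (DFunLike.congr_fun hf ⟨x, hx⟩).symm

lemma IsFredholmSolution.exists_isFixedPt (hL : 0 < L) (hK : LocallyIntegrable K)
    (hΨ : ContinuousOn Ψ (Icc 0 L)) {θ : ℝ → ℝ} (hθ : IsFredholmSolution L K Ψ θ) :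
    ∃ f : C(Icc 0 L, ℝ), IsFixedPt (fredholmMap hL hK hΨ) f ∧ ∀ t, f t = θ t := by
  set f : C(Icc 0 L, ℝ) :=
    ⟨θ ∘ Subtype.val, hθ.1.comp_continuous continuous_subtype_val Subtype.prop⟩
  refine ⟨f, ?_, fun _ => rfl⟩
  have hext : EqOn (IccExtend hL.le f) θ (uIcc 0 L) :=
    fun ξ hξ => IccExtend_of_mem hL.le f (uIcc_of_le hL.le ▸ hξ)
  ext t
  change (∫ ξ in (0:ℝ)..L, IccExtend hL.le f ξ * K (t - ξ)) + Ψ t = θ t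
  rw [intervalIntegral.integral_congr fun ξ hξ => congrArg (· * K (t - ξ)) (hext hξ)]
  exact (hθ.2 t t.2).symm

theorem exists_isFredholmSolution_eqOn (hL : 0 < L) (hK : LocallyIntegrable K) (hq : q < 1)
    (hKq : ∀ x ∈ Icc 0 L, ∫ ξ in (0:ℝ)..L, |K (x - ξ)| ≤ q) (hΨ : ContinuousOn Ψ (Icc 0 L)) :
    ∃ θ, IsFredholmSolution L K Ψ θ ∧
      ∀ θ', IsFredholmSolution L K Ψ θ' → EqOn θ θ' (Icc 0 L) := by
  have hT := contractingWith_fredholmMap hL hK hΨ hq hKq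
  refine ⟨IccExtend hL.le (hT.fixedPoint _),
    isFredholmSolution_IccExtend hL hK hΨ hT.fixedPoint_isFixedPt, fun θ' hθ' x hx => ?_⟩
  obtain ⟨f, hf, hfθ⟩ := hθ'.exists_isFixedPt hL hK hΨ
  rw [IccExtend_of_mem hL.le _ hx, ← hT.fixedPoint_unique hf]
  exact hfθ ⟨x, hx⟩

end Fredholm

@[fun_prop]
lemma Real.measurable_tan : Measurable tan := by
  have : tan = fun x => sin x / cos x := funext tan_eq_sin_div_cos
  exact this ▸ measurable_sin.div measurable_cos

lemma tan_mul_exp_nonneg (a : ℝ) {ψ : ℝ} (hψ : ψ ∈ Icc 0 (π / 2)) :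
    0 ≤ tan ψ * exp (-a / cos ψ) :=
  mul_nonneg (tan_nonneg_of_nonneg_of_le_pi_div_two hψ.1 hψ.2) (exp_nonneg _)

-- The exponential integral `E₁ a = ∫₀¹ exp (-a / μ) dμ / μ`, written in the variable `μ = cos ψ`;
-- at `a = 0` it diverges and the Bochner integral gives the junk value `0`, on a null set only.
noncomputable def expIntegralOne (a : ℝ) : ℝ := ∫ ψ in (0:ℝ)..(π / 2), tan ψ * exp (-a / cos ψ)

lemma expIntegralOne_nonneg (a : ℝ) : 0 ≤ expIntegralOne a :=
  intervalIntegral.integral_nonneg pi_div_two_pos.le fun _ hψ => tan_mul_exp_nonneg a hψ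

lemma integral_exp_neg_div {k : ℝ} (hk : k ≠ 0) (c : ℝ) :
    ∫ a in (0:ℝ)..c, exp (-a / k) = k * (1 - exp (-c / k)) := by
  have := intervalIntegral.integral_comp_mul_left (a := 0) (b := c) exp (c := -k⁻¹)
    (by simpa using hk)
  simp only [mul_zero, integral_exp, exp_zero, smul_eq_mul, inv_neg, neg_mul] at this
  rw [show (fun a => exp (-a / k)) = fun a => exp (-(k⁻¹ * a)) by ext; ring_nf, this]
  field_simp
  ring_nf

lemma integral_tan_mul_exp (ψ c : ℝ) :
    ∫ a in (0:ℝ)..c, tan ψ * exp (-a / cos ψ) = sin ψ * (1 - exp (-c / cos ψ)) := by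
  rcases eq_or_ne (cos ψ) 0 with h | h
  · simp [tan_eq_sin_div_cos, h]
  · rw [intervalIntegral.integral_const_mul, integral_exp_neg_div h, tan_eq_sin_div_cos]
    field_simp

lemma sin_mul_one_sub_exp_mem_Icc {c ψ : ℝ} (hc : 0 ≤ c) (hψ : ψ ∈ Icc 0 (π / 2)) :
    sin ψ * (1 - exp (-c / cos ψ)) ∈ Icc 0 1 := by
  have hsin : 0 ≤ sin ψ := sin_nonneg_of_nonneg_of_le_pi hψ.1 (by linarith [hψ.2, pi_pos])
  have hexp : exp (-c / cos ψ) ≤ 1 :=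
    exp_le_one_iff.2 (div_nonpos_of_nonpos_of_nonneg (by linarith)
      (cos_nonneg_of_mem_Icc ⟨by linarith [hψ.1, pi_pos], hψ.2⟩))
  constructor
  · exact mul_nonneg hsin (by linarith)
  · nlinarith [sin_le_one ψ, exp_pos (-c / cos ψ)]

lemma integrableOn_sin_mul_one_sub_exp {c : ℝ} (hc : 0 ≤ c) :
    IntegrableOn (fun ψ => sin ψ * (1 - exp (-c / cos ψ))) (Icc 0 (π / 2)) := by
  refine Measure.integrableOn_of_bounded (M := 1) (by simp)
    (by fun_prop : Measurable _).aestronglyMeasurable ?_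
  filter_upwards [ae_restrict_mem measurableSet_Icc] with ψ hψ
  have h := sin_mul_one_sub_exp_mem_Icc hc hψ
  rw [Real.norm_of_nonneg h.1]
  exact h.2

lemma integrable_tan_mul_exp_prod {c : ℝ} (hc : 0 ≤ c) :
    Integrable (fun p : ℝ × ℝ => tan p.2 * exp (-p.1 / cos p.2))
      ((volume.restrict (Ioc 0 c)).prod (volume.restrict (Ioc 0 (π / 2)))) := by
  rw [integrable_prod_iff' (by fun_prop : Measurable _).aestronglyMeasurable]
  refine ⟨ae_of_all _ fun ψ =>
    (by fun_prop : Continuous fun a => tan ψ * exp (-a / cos ψ)).integrableOn_Ioc, ?_⟩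
  refine ((integrableOn_sin_mul_one_sub_exp hc).mono_set Ioc_subset_Icc_self).congr ?_
  filter_upwards [ae_restrict_mem measurableSet_Ioc] with ψ hψ
  have hψ' : ψ ∈ Icc 0 (π / 2) := Ioc_subset_Icc_self hψ
  simp only [Real.norm_of_nonneg (tan_mul_exp_nonneg _ hψ')]
  rw [← intervalIntegral.integral_of_le hc, integral_tan_mul_exp]

lemma integrableOn_expIntegralOne {c : ℝ} (hc : 0 ≤ c) : IntegrableOn expIntegralOne (Ioc 0 c) := by
  refine (integrable_tan_mul_exp_prod hc).integral_prod_left.congr (ae_of_all _ fun a => ?_)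
  simp only [expIntegralOne, intervalIntegral.integral_of_le pi_div_two_pos.le]

lemma integral_expIntegralOne {c : ℝ} (hc : 0 ≤ c) :
    ∫ a in (0:ℝ)..c, expIntegralOne a = ∫ ψ in (0:ℝ)..(π / 2), sin ψ * (1 - exp (-c / cos ψ)) := by
  simp only [expIntegralOne, intervalIntegral.integral_of_le hc,
    intervalIntegral.integral_of_le pi_div_two_pos.le]
  rw [integral_integral_swap (integrable_tan_mul_exp_prod hc)]
  refine setIntegral_congr_fun measurableSet_Ioc fun ψ _ => ?_
  rw [← intervalIntegral.integral_of_le hc, integral_tan_mul_exp]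

lemma integral_sin_mul_one_sub_exp_le {c : ℝ} (hc : 0 ≤ c) :
    ∫ ψ in (0:ℝ)..(π / 2), sin ψ * (1 - exp (-c / cos ψ)) ≤ 1 - exp (-2 * c) / 2 := by
  have h3 : (0:ℝ) ≤ π / 3 := by positivity
  have h32 : π / 3 ≤ π / 2 := by linarith [pi_pos]
  have hint : ∀ {u v : ℝ}, 0 ≤ u → u ≤ v → v ≤ π / 2 →
      IntervalIntegrable (fun ψ => sin ψ * (1 - exp (-c / cos ψ))) volume u v := fun hu huv hv =>
    ((integrableOn_sin_mul_one_sub_exp hc).mono_set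
      (by rw [uIcc_of_le huv]; exact Icc_subset_Icc hu hv)).intervalIntegrable
  -- The mass is lost in the directions with `cos ψ ≥ 1/2`, where `exp (-c / cos ψ) ≥ exp (-2c)`.
  have hsteep : ∫ ψ in (0:ℝ)..(π / 3), sin ψ * (1 - exp (-c / cos ψ))
      ≤ ∫ ψ in (0:ℝ)..(π / 3), (1 - exp (-2 * c)) * sin ψ := by
    refine intervalIntegral.integral_mono_on h3 (hint le_rfl h3 h32)
      ((by fun_prop : Continuous fun ψ => (1 - exp (-2 * c)) * sin ψ).intervalIntegrable _ _)
      fun ψ hψ => ?_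
    have hcos : 1 / 2 ≤ cos ψ := by
      rw [← cos_pi_div_three]
      exact cos_le_cos_of_nonneg_of_le_pi hψ.1 (by linarith [pi_pos]) hψ.2
    have hexp : exp (-2 * c) ≤ exp (-c / cos ψ) := by
      rw [exp_le_exp, neg_div, neg_mul, neg_le_neg_iff, div_le_iff₀ (by linarith)]
      nlinarith
    have hsin : 0 ≤ sin ψ := sin_nonneg_of_nonneg_of_le_pi hψ.1 (by linarith [hψ.2, pi_pos])
    nlinarith
  have hflat : ∫ ψ in (π / 3)..(π / 2), sin ψ * (1 - exp (-c / cos ψ))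
      ≤ ∫ ψ in (π / 3)..(π / 2), sin ψ := by
    refine intervalIntegral.integral_mono_on h32 (hint h3 h32 le_rfl)
      (continuous_sin.intervalIntegrable _ _) fun ψ hψ => ?_
    have hsin : 0 ≤ sin ψ :=
      sin_nonneg_of_nonneg_of_le_pi (h3.trans hψ.1) (by linarith [hψ.2, pi_pos])
    nlinarith [exp_pos (-c / cos ψ)]
  rw [← intervalIntegral.integral_add_adjacent_intervals (hint le_rfl h3 h32) (hint h3 h32 le_rfl)]
  rw [intervalIntegral.integral_const_mul, integral_sin, cos_zero, cos_pi_div_three] at hsteep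
  rw [integral_sin, cos_pi_div_two, cos_pi_div_three] at hflat
  linarith

lemma integral_expIntegralOne_le {c : ℝ} (hc : 0 ≤ c) :
    ∫ a in (0:ℝ)..c, expIntegralOne a ≤ 1 - exp (-2 * c) / 2 :=
  (integral_expIntegralOne hc).trans_le (integral_sin_mul_one_sub_exp_le hc)

noncomputable def slabKernel (x : ℝ) : ℝ := 1 / 2 * expIntegralOne |x|

lemma slabKernel_nonneg (x : ℝ) : 0 ≤ slabKernel x :=
  mul_nonneg (by norm_num) (expIntegralOne_nonneg _)

lemma slabKernel_neg (x : ℝ) : slabKernel (-x) = slabKernel x := by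
  rw [slabKernel, slabKernel, abs_neg]

lemma integral_slabKernel {c : ℝ} (hc : 0 ≤ c) :
    ∫ u in (0:ℝ)..c, slabKernel u = 1 / 2 * ∫ a in (0:ℝ)..c, expIntegralOne a := by
  rw [← intervalIntegral.integral_const_mul]
  refine intervalIntegral.integral_congr fun u hu => ?_
  rw [uIcc_of_le hc] at hu
  simp only [slabKernel, abs_of_nonneg hu.1]

lemma integral_neg_slabKernel (c : ℝ) :
    ∫ u in (-c)..0, slabKernel u = ∫ u in (0:ℝ)..c, slabKernel u := by
  simpa [slabKernel_neg] using
    (intervalIntegral.integral_comp_neg (a := 0) (b := c) slabKernel).symm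

lemma intervalIntegrable_slabKernel_of_nonneg {c : ℝ} (hc : 0 ≤ c) :
    IntervalIntegrable slabKernel volume 0 c := by
  rw [intervalIntegrable_iff_integrableOn_Ioc_of_le hc]
  refine IntegrableOn.congr_fun ((integrableOn_expIntegralOne hc).const_mul (1 / 2))
    (fun u hu => ?_) measurableSet_Ioc
  simp only [slabKernel, abs_of_pos hu.1]

lemma intervalIntegrable_slabKernel (a b : ℝ) : IntervalIntegrable slabKernel volume a b := by
  have hc : 0 ≤ |a| + |b| := by positivity
  have hpos := intervalIntegrable_slabKernel_of_nonneg hc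
  have hneg : IntervalIntegrable slabKernel volume (-(|a| + |b|)) 0 := by
    simpa [slabKernel_neg] using ((IntervalIntegrable.iff_comp_neg).1 hpos).symm
  refine (hneg.trans hpos).mono_set (uIcc_subset_uIcc ?_ ?_) <;>
    rw [uIcc_of_le (by linarith)] <;> refine abs_le.1 ?_ <;> simp

lemma locallyIntegrable_slabKernel : LocallyIntegrable slabKernel := fun x =>
  ⟨Ioo (x - 1) (x + 1), Ioo_mem_nhds (by linarith) (by linarith),
    ((intervalIntegrable_slabKernel (x - 1) (x + 1)).1).mono_set Ioo_subset_Ioc_self⟩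

lemma integral_abs_slabKernel_sub_le {L x : ℝ} (hx : x ∈ Icc 0 L) :
    ∫ ξ in (0:ℝ)..L, |slabKernel (x - ξ)| ≤ 1 - exp (-2 * L) / 2 := by
  have hsplit : ∫ ξ in (0:ℝ)..L, |slabKernel (x - ξ)|
      = (∫ u in (0:ℝ)..(L - x), slabKernel u) + ∫ u in (0:ℝ)..x, slabKernel u := by
    simp only [abs_of_nonneg (slabKernel_nonneg _), intervalIntegral.integral_comp_sub_left,
      sub_zero]
    rw [← intervalIntegral.integral_add_adjacent_intervals (b := 0)
      (intervalIntegrable_slabKernel _ _) (intervalIntegrable_slabKernel _ _),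
      ← integral_neg_slabKernel (L - x), neg_sub]
  have hleft := integral_expIntegralOne_le (sub_nonneg.2 hx.2)
  have hright := integral_expIntegralOne_le hx.1
  have h1 : exp (-2 * L) ≤ exp (-2 * (L - x)) := exp_le_exp.2 (by linarith [hx.1])
  have h2 : exp (-2 * L) ≤ exp (-2 * x) := exp_le_exp.2 (by linarith [hx.2])
  rw [hsplit, integral_slabKernel (sub_nonneg.2 hx.2), integral_slabKernel hx.1]
  linarith

theorem fredholm_second_kind_existence_uniqueness
    (L : ℝ) (hL : 0 < L)
    (K : ℝ → ℝ)
    (hK : K = fun x => (1/2) * ∫ ψ in (0:ℝ)..(π/2), Real.tan ψ * Real.exp (-|x| / Real.cos ψ))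
    (Ψ : ℝ → ℝ) (hΨ : ContinuousOn Ψ (Icc 0 L)) :
    ∃ θ : ℝ → ℝ,
      (ContinuousOn θ (Icc 0 L) ∧
        ∀ x ∈ Icc 0 L, θ x = (∫ ξ in (0:ℝ)..L, θ ξ * K (x - ξ)) + Ψ x) ∧
      ∀ θ' : ℝ → ℝ,
        (ContinuousOn θ' (Icc 0 L) ∧
          ∀ x ∈ Icc 0 L, θ' x = (∫ ξ in (0:ℝ)..L, θ' ξ * K (x - ξ)) + Ψ x) →
        EqOn θ θ' (Icc 0 L) := by
  subst hK
  have hq : 1 - exp (-2 * L) / 2 < 1 := by linarith [exp_pos (-2 * L)]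
  exact exists_isFredholmSolution_eqOn hL locallyIntegrable_slabKernel hq
    (fun _ hx => integral_abs_slabKernel_sub_le hx) hΨ
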